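/- arXiv:1701.05695 — 2 statements merged into one kernel-verified Lean document; each statement's English description precedes it below -/
import Mathlib

section
/- Let σ > 0, t > 0, μ ∈ ℝ, and 0 < K ≤ K'. Set d₁ := (log(K/K') − μt)/(σ√t) and d₂ := (log(K/K') + μt)/(σ√t). Then ∫_ℝ [max(e^y − K', 0) − max(e^{2 log K − y} − K', 0)] · (2πσ²t)^{−1/2} exp(−(y − (log K + μt))²/(2σ²t)) dy = K'[𝒩(d₁) − 𝒩(d₂)] + K e^{σ²t/2} [e^{μt} 𝒩(d₂ + σ√t) − e^{−μt} 𝒩(d₁ + σ√t)]. (This is the first order hedging error He⁽¹⁾ with t = T − τ, i.e. the difference between the price of a call on e^{X} with strike K' and the price of the reflected claim (e^{2 log K − X} − K')⁺, where X is Gaussian with mean log K + μt and variance σ²t.) -/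
/-!
Reflecting `y ↦ 2 log K - y` maps the Gaussian density of mean `log K + μt` to the one of mean
`log K - μt`, so the reflected claim is priced as a call with strike `K'` on a Gaussian of mean
`log K - μt`. Each call is then priced as in Black–Scholes: on `{y > log K'}` the payoff is
`e^y - K'`, and `e^y` times the `N(m, v)` density is `e^{m + v/2}` times the `N(m + v, v)` density,
so both pieces are Gaussian tails, `𝒩((m - log K')/√v + √v)` and `𝒩((m - log K')/√v)`.
-/

open MeasureTheory

noncomputable def stdNormalCdf (x : ℝ) : ℝ :=
  ∫ u in Set.Iio x, (Real.sqrt (2 * Real.pi))⁻¹ * Real.exp (-u ^ 2 / 2)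

open ProbabilityTheory Set Real
open scoped NNReal

lemma stdNormalCdf_eq_setIntegral_gaussianPDFReal (x : ℝ) :
    stdNormalCdf x = ∫ u in Iio x, gaussianPDFReal 0 1 u := by
  simp [stdNormalCdf, gaussianPDFReal]

lemma gaussianPDFReal_const_sub (c m : ℝ) (v : ℝ≥0) (y : ℝ) :
    gaussianPDFReal m v (c - y) = gaussianPDFReal (c - m) v y := by
  simp only [gaussianPDFReal]
  ring_nf

section
variable {v : ℝ≥0}

lemma sqrt_mul_gaussianPDFReal_add_sqrt_mul (m : ℝ) (hv : v ≠ 0) (u : ℝ) :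
    √v * gaussianPDFReal m v (m + √v * u) = gaussianPDFReal 0 1 u := by
  have hv' : (0 : ℝ) < v := NNReal.coe_pos.mpr hv.bot_lt
  simp only [gaussianPDFReal, add_sub_cancel_left, mul_pow, sq_sqrt hv'.le, NNReal.coe_one,
    mul_one, sub_zero, sqrt_mul (by positivity : (0 : ℝ) ≤ 2 * π)]
  field_simp

lemma integral_mul_gaussianPDFReal_eq_standard (g : ℝ → ℝ) (m : ℝ) (hv : v ≠ 0) :
    ∫ y, g y * gaussianPDFReal m v y = ∫ u, g (m + √v * u) * gaussianPDFReal 0 1 u := by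
  have hs : 0 < √(v : ℝ) := sqrt_pos.mpr (NNReal.coe_pos.mpr hv.bot_lt)
  have hsub :=
    Measure.integral_comp_mul_left (fun w ↦ g (m + w) * gaussianPDFReal m v (m + w)) √v
  rw [integral_add_left_eq_self (fun y ↦ g y * gaussianPDFReal m v y) m,
    abs_of_pos (inv_pos.mpr hs), smul_eq_mul] at hsub
  simp_rw [← sqrt_mul_gaussianPDFReal_add_sqrt_mul m hv, mul_left_comm _ √(v : ℝ),
    integral_const_mul, hsub, mul_inv_cancel_left₀ hs.ne']

lemma setIntegral_Ioi_gaussianPDFReal (m a : ℝ) (hv : v ≠ 0) :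
    ∫ y in Ioi a, gaussianPDFReal m v y = stdNormalCdf ((m - a) / √v) := by
  have hs : 0 < √(v : ℝ) := sqrt_pos.mpr (NNReal.coe_pos.mpr hv.bot_lt)
  have hpreimage (u : ℝ) : (Ioi a).indicator (1 : ℝ → ℝ) (m + √v * u)
      = (Ioi ((a - m) / √v)).indicator 1 u := by
    simp only [indicator_apply, mem_Ioi, div_lt_iff₀ hs, sub_lt_iff_lt_add', mul_comm u,
      Pi.one_apply]
  calc ∫ y in Ioi a, gaussianPDFReal m v y
      = ∫ y, (Ioi a).indicator (1 : ℝ → ℝ) y * gaussianPDFReal m v y := by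
        simp_rw [← indicator_mul_left, Pi.one_apply, one_mul,
          ← integral_indicator measurableSet_Ioi]
    _ = ∫ u in Ioi ((a - m) / √v), gaussianPDFReal 0 1 u := by
        simp_rw [integral_mul_gaussianPDFReal_eq_standard _ m hv, hpreimage, ← indicator_mul_left,
          Pi.one_apply, one_mul, ← integral_indicator measurableSet_Ioi]
    _ = ∫ u in Ioi ((a - m) / √v), gaussianPDFReal 0 1 (-u) := by
        simp_rw [← zero_sub, gaussianPDFReal_const_sub, sub_zero]
    _ = stdNormalCdf ((m - a) / √v) := by
        rw [integral_comp_neg_Ioi, integral_Iic_eq_integral_Iio,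
          stdNormalCdf_eq_setIntegral_gaussianPDFReal, ← neg_div, neg_sub]

lemma exp_mul_gaussianPDFReal (m : ℝ) (hv : v ≠ 0) (y : ℝ) :
    exp y * gaussianPDFReal m v y = exp (m + v / 2) * gaussianPDFReal (m + v) v y := by
  have hv' : (v : ℝ) ≠ 0 := by exact_mod_cast hv
  simp only [gaussianPDFReal]
  rw [mul_left_comm, mul_left_comm (exp _), ← exp_add, ← exp_add]
  congr 2
  field_simp
  ring

lemma max_exp_sub_mul_eq_indicator (f : ℝ → ℝ) {K : ℝ} (hK : 0 < K) (y : ℝ) :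
    max (exp y - K) 0 * f y = (Ioi (log K)).indicator (fun y ↦ (exp y - K) * f y) y := by
  by_cases hy : y ∈ Ioi (log K)
  · rw [indicator_of_mem hy, max_eq_left (sub_nonneg.mpr (lt_exp_of_log_lt hy).le)]
  · have : exp y ≤ K := (exp_le_exp.mpr (not_lt.mp hy)).trans_eq (exp_log hK)
    rw [indicator_of_notMem hy, max_eq_right (sub_nonpos.mpr this), zero_mul]

lemma integrable_exp_mul_gaussianPDFReal (m : ℝ) (hv : v ≠ 0) :
    Integrable fun y ↦ exp y * gaussianPDFReal m v y := by
  simp_rw [exp_mul_gaussianPDFReal m hv]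
  exact (integrable_gaussianPDFReal _ _).const_mul _

lemma integrable_max_exp_sub_mul_gaussianPDFReal (m : ℝ) (hv : v ≠ 0) {K : ℝ} (hK : 0 < K) :
    Integrable fun y ↦ max (exp y - K) 0 * gaussianPDFReal m v y := by
  simp_rw [max_exp_sub_mul_eq_indicator _ hK, sub_mul]
  exact (((integrable_exp_mul_gaussianPDFReal m hv).sub
    ((integrable_gaussianPDFReal m v).const_mul K))).indicator measurableSet_Ioi

theorem integral_max_exp_sub_mul_gaussianPDFReal (m : ℝ) (hv : v ≠ 0) {K : ℝ} (hK : 0 < K) :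
    ∫ y, max (exp y - K) 0 * gaussianPDFReal m v y
      = exp (m + v / 2) * stdNormalCdf ((m - log K) / √v + √v)
        - K * stdNormalCdf ((m - log K) / √v) := by
  have hshift : (m + v - log K) / √v = (m - log K) / √v + √v := by
    rw [add_sub_right_comm, add_div, div_sqrt]
  simp_rw [max_exp_sub_mul_eq_indicator _ hK, integral_indicator measurableSet_Ioi, sub_mul,
    exp_mul_gaussianPDFReal m hv]
  rw [integral_sub ((integrable_gaussianPDFReal _ v).const_mul _).integrableOn
      ((integrable_gaussianPDFReal m v).const_mul K).integrableOn,
    integral_const_mul, integral_const_mul, setIntegral_Ioi_gaussianPDFReal _ _ hv,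
    setIntegral_Ioi_gaussianPDFReal _ _ hv, hshift]

end

lemma gaussianPDFReal_two_mul_sub (a δ : ℝ) (v : ℝ≥0) (y : ℝ) :
    gaussianPDFReal (a - δ) v (2 * a - y) = gaussianPDFReal (a + δ) v y := by
  rw [gaussianPDFReal_const_sub]
  ring_nf

lemma MeasureTheory.Integrable.comp_two_mul_sub_mul_gaussianPDFReal {f : ℝ → ℝ} {a δ : ℝ}
    {v : ℝ≥0} (hf : Integrable fun y ↦ f y * gaussianPDFReal (a - δ) v y) :
    Integrable fun y ↦ f (2 * a - y) * gaussianPDFReal (a + δ) v y := by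
  simpa only [gaussianPDFReal_two_mul_sub] using hf.comp_sub_left (2 * a)

lemma integral_comp_two_mul_sub_mul_gaussianPDFReal (f : ℝ → ℝ) (a δ : ℝ) (v : ℝ≥0) :
    ∫ y, f (2 * a - y) * gaussianPDFReal (a + δ) v y
      = ∫ y, f y * gaussianPDFReal (a - δ) v y := by
  rw [← integral_sub_left_eq_self (fun y ↦ f y * gaussianPDFReal (a - δ) v y) volume (2 * a)]
  simp_rw [gaussianPDFReal_two_mul_sub]

/-- First order hedging error in closed form: for `σ, t > 0`, `μ ∈ ℝ`,
`0 < K ≤ K'`, with `d₁ := (log(K/K') − μt)/(σ√t)`, `d₂ := (log(K/K') + μt)/(σ√t)`,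
`∫ [max(e^y−K',0) − max(e^{2 log K − y}−K',0)] (2πσ²t)^{−1/2} e^{−(y−(log K+μt))²/(2σ²t)} dy
 = K'[𝒩(d₁) − 𝒩(d₂)] + K e^{σ²t/2}[e^{μt} 𝒩(d₂+σ√t) − e^{−μt} 𝒩(d₁+σ√t)]`. -/
theorem stmt_15 (σ t μ K K' : ℝ) (hσ : 0 < σ) (ht : 0 < t) (hK : 0 < K) (hKK' : K ≤ K') :
    (∫ y : ℝ, (max (Real.exp y - K') 0 - max (Real.exp (2 * Real.log K - y) - K') 0)
        * ((Real.sqrt (2 * Real.pi * σ ^ 2 * t))⁻¹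
          * Real.exp (-(y - (Real.log K + μ * t)) ^ 2 / (2 * σ ^ 2 * t))))
      = K' * (stdNormalCdf ((Real.log (K / K') - μ * t) / (σ * Real.sqrt t))
              - stdNormalCdf ((Real.log (K / K') + μ * t) / (σ * Real.sqrt t)))
        + K * Real.exp (σ ^ 2 * t / 2)
          * (Real.exp (μ * t)
              * stdNormalCdf ((Real.log (K / K') + μ * t) / (σ * Real.sqrt t) + σ * Real.sqrt t)
            - Real.exp (-(μ * t))
              * stdNormalCdf ((Real.log (K / K') - μ * t) / (σ * Real.sqrt t) + σ * Real.sqrt t)) := by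
  have hK' : 0 < K' := hK.trans_le hKK'
  set v : ℝ≥0 := ⟨σ ^ 2 * t, by positivity⟩
  have hvt : (v : ℝ) = σ ^ 2 * t := rfl
  have hv : v ≠ 0 := by rw [← NNReal.coe_ne_zero, hvt]; positivity
  have hsqrt : √(v : ℝ) = σ * √t := by rw [hvt, sqrt_mul (sq_nonneg σ), sqrt_sq hσ.le]
  have hdensity (m y : ℝ) : (√(2 * π * σ ^ 2 * t))⁻¹ * exp (-(y - m) ^ 2 / (2 * σ ^ 2 * t))
      = gaussianPDFReal m v y := by
    simp only [gaussianPDFReal, hvt, mul_assoc]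
  have hpayoff (m : ℝ) := integrable_max_exp_sub_mul_gaussianPDFReal m hv hK'
  simp_rw [hdensity, sub_mul]
  rw [integral_sub (hpayoff _) (hpayoff (log K - μ * t)).comp_two_mul_sub_mul_gaussianPDFReal,
    integral_comp_two_mul_sub_mul_gaussianPDFReal (fun y ↦ max (exp y - K') 0),
    integral_max_exp_sub_mul_gaussianPDFReal _ hv hK',
    integral_max_exp_sub_mul_gaussianPDFReal _ hv hK', hsqrt, hvt, log_div hK.ne' hK'.ne']
  rw [add_sub_right_comm (log K), sub_right_comm (log K)]
  simp only [exp_add, exp_sub, exp_neg, exp_log hK]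
  ring
end

section
/- Let σ > 0, t₁, t₂ > 0, μ ∈ ℝ, and K, K' > 0. Then ∫_ℝ 1_{z ≥ log K} · [∫_ℝ (−μ) ∂_y[(2πσ²t₂)^{−1/2} exp(−(z−y)²/(2σ²t₂))] · max(e^y − K', 0) dy] · (2πσ²t₁)^{−1/2} exp(−(z − (log K + μt₁))²/(2σ²t₁)) dz = μ K e^{μt₁ + σ²(t₁+t₂)/2} · ∫_0^∞ 𝒩((log(K/K') + u + σ²t₂)/(σ√t₂)) · (2πσ²t₁)^{−1/2} exp(−(u − (μ + σ²)t₁)²/(2σ²t₁)) du. -/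
open MeasureTheory

/-- The Gaussian kernel `p_σ(t,x,y) := (2πσ²t)^{−1/2} exp(−(x−y)²/(2σ²t))`. -/
noncomputable def gaussKer (σ t x y : ℝ) : ℝ :=
  (Real.sqrt (2 * Real.pi * σ ^ 2 * t))⁻¹ * Real.exp (-(x - y) ^ 2 / (2 * σ ^ 2 * t))

open Real Set Filter Topology

/-! Integrating by parts in `y` moves the derivative from the Gaussian kernel onto the call payoff
`(e^y - K')⁺`, whose derivative is `e^y` on `y > log K'`. Multiplying a Gaussian density of
variance `v` by `e^y` shifts its mean by `v` at the cost of the factor `e^{mean + v/2}`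
(exponential tilting), so the inner integral is `μ e^{z + σ²t₂/2} 𝒩((z + σ²t₂ - log K')/(σ√t₂))`.
Substituting `z = log K + u` and tilting the outer density in the same way gives the right-hand
side. -/

theorem setIntegral_Ioi_comp_add_right {E : Type*} [NormedAddCommGroup E] [NormedSpace ℝ E]
    (f : ℝ → E) (a c : ℝ) : ∫ x in Ioi a, f (x + c) = ∫ x in Ioi (a + c), f x := by
  have := (measurePreserving_add_right volume c).setIntegral_preimage_emb
    (measurableEmbedding_addRight c) f (Ioi (a + c))
  simpa only [preimage_add_const_Ioi, add_sub_cancel_right] using this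

section GaussianKernel

variable {σ t : ℝ}

theorem gaussKer_symm (x y : ℝ) : gaussKer σ t x y = gaussKer σ t y x := by
  rw [gaussKer, gaussKer, ← neg_sub y x, neg_sq]

theorem gaussKer_add_add (x y c : ℝ) : gaussKer σ t (x + c) (y + c) = gaussKer σ t x y := by
  rw [gaussKer, gaussKer, add_sub_add_right_eq_sub]

theorem exp_mul_gaussKer (hσ : σ ≠ 0) (ht : t ≠ 0) (x y : ℝ) :
    exp y * gaussKer σ t x y = exp (x + σ ^ 2 * t / 2) * gaussKer σ t (x + σ ^ 2 * t) y := by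
  have hexp : exp y * exp (-(x - y) ^ 2 / (2 * σ ^ 2 * t))
      = exp (x + σ ^ 2 * t / 2) * exp (-(x + σ ^ 2 * t - y) ^ 2 / (2 * σ ^ 2 * t)) := by
    rw [← exp_add, ← exp_add]
    congr 1
    field_simp
    ring
  rw [gaussKer, gaussKer, mul_left_comm, hexp, mul_left_comm]

theorem hasDerivAt_gaussKer (hσ : σ ≠ 0) (ht : t ≠ 0) (x y : ℝ) :
    HasDerivAt (gaussKer σ t x) (gaussKer σ t x y * ((x - y) / (σ ^ 2 * t))) y := by
  have hexp : HasDerivAt (fun y => -(x - y) ^ 2 / (2 * σ ^ 2 * t)) ((x - y) / (σ ^ 2 * t)) y := by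
    refine ((((hasDerivAt_id' y).const_sub x).pow 2).neg.div_const (2 * σ ^ 2 * t)).congr_deriv ?_
    field_simp
    ring
  refine (hexp.exp.const_mul (Real.sqrt (2 * Real.pi * σ ^ 2 * t))⁻¹).congr_deriv ?_
  rw [gaussKer]
  ring

theorem integrable_gaussKer (hσ : σ ≠ 0) (ht : 0 < t) (x : ℝ) : Integrable (gaussKer σ t x) := by
  have hb : 0 < (2 * σ ^ 2 * t)⁻¹ := by positivity
  convert ((integrable_exp_neg_mul_sq hb).comp_sub_right x).const_mul
    (Real.sqrt (2 * Real.pi * σ ^ 2 * t))⁻¹ using 2 with y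
  rw [gaussKer, ← neg_sub y x, neg_sq]
  ring_nf

theorem integrable_gaussKer_mul_sub (hσ : σ ≠ 0) (ht : 0 < t) (x : ℝ) :
    Integrable fun y => gaussKer σ t x y * (x - y) := by
  have hb : 0 < (2 * σ ^ 2 * t)⁻¹ := by positivity
  convert (((integrable_mul_exp_neg_mul_sq hb).comp_sub_right x).const_mul
    (-(Real.sqrt (2 * Real.pi * σ ^ 2 * t))⁻¹)) using 2 with y
  rw [gaussKer, ← neg_sub y x, neg_sq]
  ring_nf

theorem integrable_exp_mul_gaussKer (hσ : σ ≠ 0) (ht : 0 < t) (x : ℝ) :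
    Integrable fun y => exp y * gaussKer σ t x y := by
  simp_rw [exp_mul_gaussKer hσ ht.ne']
  exact (integrable_gaussKer hσ ht _).const_mul _

theorem integrable_exp_mul_gaussKer_mul_sub (hσ : σ ≠ 0) (ht : 0 < t) (x : ℝ) :
    Integrable fun y => exp y * gaussKer σ t x y * (x - y) := by
  have hshift := ((integrable_gaussKer_mul_sub hσ ht (x + σ ^ 2 * t)).sub
    ((integrable_gaussKer hσ ht (x + σ ^ 2 * t)).mul_const (σ ^ 2 * t))).const_mul
    (exp (x + σ ^ 2 * t / 2))
  refine hshift.congr (Eventually.of_forall fun y => ?_)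
  simp only [Pi.sub_apply, exp_mul_gaussKer hσ ht.ne']
  ring

theorem setIntegral_Ioi_gaussKer (hσ : 0 < σ) (ht : 0 < t) (x a : ℝ) :
    ∫ y in Ioi a, gaussKer σ t x y = stdNormalCdf ((x - a) / (σ * √t)) := by
  set s := σ * √t with hs_def
  have hs : 0 < s := by positivity
  have himage : (fun u => x - s * u) '' Iio ((x - a) / s) = Ioi a := by
    ext y
    refine ⟨?_, fun hy => ⟨(x - y) / s, ?_, by field_simp; ring⟩⟩
    · rintro ⟨u, hu, rfl⟩
      rw [mem_Iio, lt_div_iff₀ hs] at hu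
      exact mem_Ioi.2 (by linarith)
    · exact div_lt_div_of_pos_right (by linarith [mem_Ioi.1 hy]) hs
  have hderiv : ∀ u ∈ Iio ((x - a) / s),
      HasDerivWithinAt (fun u => x - s * u) (-s) (Iio ((x - a) / s)) u := fun u _ =>
    (((hasDerivAt_id' u).const_mul s).const_sub x).hasDerivWithinAt.congr_deriv (by ring)
  have hinj : InjOn (fun u => x - s * u) (Iio ((x - a) / s)) := fun u _ w _ h =>
    mul_left_cancel₀ hs.ne' (sub_right_injective h)
  rw [← himage, integral_image_eq_integral_abs_deriv_smul measurableSet_Iio hderiv hinj,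
    stdNormalCdf]
  refine setIntegral_congr_fun measurableSet_Iio fun u _ => ?_
  have hvar : σ ^ 2 * t = s ^ 2 := by rw [hs_def, mul_pow, sq_sqrt ht.le]
  have hsqrt : √(2 * π * σ ^ 2 * t) = √(2 * π) * s := by
    rw [mul_assoc, hvar, sqrt_mul (by positivity), sqrt_sq hs.le]
  have hexp : -(x - (x - s * u)) ^ 2 / (2 * s ^ 2) = -u ^ 2 / 2 := by
    field_simp
    ring
  rw [smul_eq_mul, abs_neg, abs_of_pos hs, gaussKer, hsqrt, mul_assoc 2 (σ ^ 2), hvar, hexp]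
  field_simp

theorem integral_deriv_gaussKer_mul_max_exp_sub (hσ : 0 < σ) (ht : 0 < t) {k : ℝ} (hk : 0 < k)
    (x : ℝ) :
    ∫ y, deriv (gaussKer σ t x) y * max (exp y - k) 0
      = -(exp (x + σ ^ 2 * t / 2) * stdNormalCdf ((x + σ ^ 2 * t - log k) / (σ * √t))) := by
  set L := log k
  have hkL : exp L = k := exp_log hk
  set G' := fun y => gaussKer σ t x y * ((x - y) / (σ ^ 2 * t))
  have hG : ∀ y, HasDerivAt (gaussKer σ t x) (G' y) y := hasDerivAt_gaussKer hσ.ne' ht.ne' x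
  have hvanish : ∀ y ∉ Ioi L, deriv (gaussKer σ t x) y * max (exp y - k) 0 = 0 := fun y hy => by
    rw [max_eq_right (by rw [← hkL, sub_nonpos, exp_le_exp]; exact not_lt.1 hy), mul_zero]
  have hpayoff : EqOn (fun y => deriv (gaussKer σ t x) y * max (exp y - k) 0)
      (fun y => (exp y - k) * G' y) (Ioi L) := fun y hy => by
    dsimp only
    rw [(hG y).deriv, max_eq_left (by rw [← hkL, sub_nonneg, exp_le_exp]; exact le_of_lt hy),
      mul_comm]
  have hint_payoff_deriv : Integrable fun y => (exp y - k) * G' y := by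
    refine (((integrable_exp_mul_gaussKer_mul_sub hσ.ne' ht x).sub
      ((integrable_gaussKer_mul_sub hσ.ne' ht x).const_mul k)).div_const (σ ^ 2 * t)).congr
      (Eventually.of_forall fun y => ?_)
    simp only [G', Pi.sub_apply]
    ring
  have hint_exp := integrable_exp_mul_gaussKer hσ.ne' ht x
  have hint_prod : Integrable fun y => (exp y - k) * gaussKer σ t x y := by
    simp_rw [sub_mul]
    exact hint_exp.sub ((integrable_gaussKer hσ.ne' ht x).const_mul k)
  have hprod_L : Tendsto (fun y => (exp y - k) * gaussKer σ t x y) (𝓝[>] L) (𝓝 0) := by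
    have hcont : Continuous fun y => (exp y - k) * gaussKer σ t x y :=
      (continuous_exp.sub continuous_const).mul
        (continuous_iff_continuousAt.2 fun y => (hG y).continuousAt)
    simpa [hkL] using (hcont.tendsto L).mono_left nhdsWithin_le_nhds
  have hprod_top : Tendsto (fun y => (exp y - k) * gaussKer σ t x y) atTop (𝓝 0) :=
    tendsto_zero_of_hasDerivAt_of_integrableOn_Ioi (a := L)
      (fun y _ => ((hasDerivAt_exp y).sub_const k).mul (hG y))
      (hint_exp.add hint_payoff_deriv).integrableOn hint_prod.integrableOn
  rw [← setIntegral_eq_integral_of_forall_compl_eq_zero hvanish,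
    setIntegral_congr_fun measurableSet_Ioi hpayoff,
    integral_Ioi_mul_deriv_eq_deriv_mul (fun y _ => (hasDerivAt_exp y).sub_const k)
      (fun y _ => hG y) hint_payoff_deriv.integrableOn hint_exp.integrableOn hprod_L hprod_top]
  simp_rw [exp_mul_gaussKer hσ.ne' ht.ne']
  rw [integral_const_mul, setIntegral_Ioi_gaussKer hσ ht]
  ring

theorem exp_mul_gaussKer_log_add (hσ : σ ≠ 0) (ht : t ≠ 0) {K : ℝ} (hK : 0 < K) (μ u : ℝ) :
    exp (log K + u) * gaussKer σ t (log K + u) (log K + μ * t)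
      = K * exp (μ * t + σ ^ 2 * t / 2) * gaussKer σ t u ((μ + σ ^ 2) * t) := by
  rw [add_comm (log K) u, add_comm (log K), gaussKer_add_add, exp_add, exp_log hK, gaussKer_symm u,
    mul_right_comm, exp_mul_gaussKer hσ ht, gaussKer_symm, add_mul]
  ring

theorem setIntegral_Ici_log_mul_exp_mul_gaussKer (hσ : σ ≠ 0) (ht : t ≠ 0) {K : ℝ} (hK : 0 < K)
    (f : ℝ → ℝ) (μ : ℝ) :
    ∫ z in Ici (log K), f z * (exp z * gaussKer σ t z (log K + μ * t))
      = K * exp (μ * t + σ ^ 2 * t / 2)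
          * ∫ u in Ioi 0, f (log K + u) * gaussKer σ t u ((μ + σ ^ 2) * t) := by
  have hshift := setIntegral_Ioi_comp_add_right
    (fun z => f z * (exp z * gaussKer σ t z (log K + μ * t))) 0 (log K)
  rw [zero_add] at hshift
  rw [integral_Ici_eq_integral_Ioi, ← hshift, ← integral_const_mul]
  refine setIntegral_congr_fun measurableSet_Ioi fun u _ => ?_
  rw [add_comm u, exp_mul_gaussKer_log_add hσ ht hK]
  ring

end GaussianKernel

/-- Building block of the second order hedging error: for `σ, t₁, t₂ > 0`,
`μ ∈ ℝ`, `K, K' > 0`,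
`∫ 1_{z ≥ log K} [∫ (−μ) ∂_y[p_σ(t₂,z,y)] max(e^y − K',0) dy]
    (2πσ²t₁)^{−1/2} e^{−(z−(log K+μt₁))²/(2σ²t₁)} dz
  = μ K e^{μt₁+σ²(t₁+t₂)/2} ∫_0^∞ 𝒩((log(K/K') + u + σ²t₂)/(σ√t₂))
    (2πσ²t₁)^{−1/2} e^{−(u−(μ+σ²)t₁)²/(2σ²t₁)} du`. -/
theorem stmt_18 (σ t₁ t₂ μ K K' : ℝ) (hσ : 0 < σ) (ht₁ : 0 < t₁) (ht₂ : 0 < t₂)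
    (hK : 0 < K) (hK' : 0 < K') :
    (∫ z in Set.Ici (Real.log K),
        (∫ y : ℝ, (-μ) * deriv (fun y' => gaussKer σ t₂ z y') y * max (Real.exp y - K') 0)
          * ((Real.sqrt (2 * Real.pi * σ ^ 2 * t₁))⁻¹
            * Real.exp (-(z - (Real.log K + μ * t₁)) ^ 2 / (2 * σ ^ 2 * t₁))))
      = μ * K * Real.exp (μ * t₁ + σ ^ 2 * (t₁ + t₂) / 2)
          * ∫ u in Set.Ioi (0:ℝ),
              stdNormalCdf ((Real.log (K / K') + u + σ ^ 2 * t₂) / (σ * Real.sqrt t₂))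
                * ((Real.sqrt (2 * Real.pi * σ ^ 2 * t₁))⁻¹
                  * Real.exp (-(u - (μ + σ ^ 2) * t₁) ^ 2 / (2 * σ ^ 2 * t₁))) := by
  set N := fun z => stdNormalCdf ((z + σ ^ 2 * t₂ - log K') / (σ * √t₂))
  have hinner : ∀ z, ∫ y, (-μ) * deriv (fun y' => gaussKer σ t₂ z y') y * max (exp y - K') 0
      = μ * exp (σ ^ 2 * t₂ / 2) * N z * exp z := fun z => by
    simp_rw [mul_assoc (-μ)]
    rw [integral_const_mul, integral_deriv_gaussKer_mul_max_exp_sub hσ ht₂ hK', exp_add]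
    ring
  have hN : ∀ u, N (log K + u) = stdNormalCdf ((log (K / K') + u + σ ^ 2 * t₂) / (σ * √t₂)) :=
    fun u => by
      simp only [N]
      rw [log_div hK.ne' hK'.ne']
      ring_nf
  have hexp : exp (μ * t₁ + σ ^ 2 * (t₁ + t₂) / 2)
      = exp (μ * t₁ + σ ^ 2 * t₁ / 2) * exp (σ ^ 2 * t₂ / 2) := by
    rw [← exp_add]
    ring_nf
  calc _ = ∫ z in Ici (log K), μ * exp (σ ^ 2 * t₂ / 2) * N z
          * (exp z * gaussKer σ t₁ z (log K + μ * t₁)) := by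
        refine setIntegral_congr_fun measurableSet_Ici fun z _ => ?_
        rw [hinner, gaussKer]
        ring
    _ = _ := by
        rw [setIntegral_Ici_log_mul_exp_mul_gaussKer hσ.ne' ht₁.ne' hK, hexp,
          ← integral_const_mul, ← integral_const_mul]
        refine setIntegral_congr_fun measurableSet_Ioi fun u _ => ?_
        rw [hN, gaussKer]
        ring
end
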